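/- For 0 ≤ i ≤ n ≤ v/2, the vectors v_C = Σ_{|A|=n, A∩C=∅} e_A, indexed by i-element subsets C of {1,...,v}, are linearly independent in ℂ^X where X is the set of n-element subsets of {1,...,v}. Consequently the subspace W_i = span{v_C : |C| = i} ⊖ span{v_C : |C| = i−1} has dimension C(v,i) − C(v,i−1). -/

import Mathlib

open scoped ENNReal ComplexOrder

noncomputable def opNorm2 {m : Type*} [Fintype m] [DecidableEq m] (M : Matrix m m ℂ) : ℝ :=
  ‖Matrix.toEuclideanCLM (𝕜 := ℂ) M‖

noncomputable def schurNorm {m : Type*} [Fintype m] [DecidableEq m] (M : Matrix m m ℂ) : ℝ :=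
  ⨆ X : {X : Matrix m m ℂ // opNorm2 X ≤ 1}, opNorm2 (M.hadamard X.1)

noncomputable def schurNormENN (A : ℕ → ℕ → ℂ) : ℝ≥0∞ :=
  ⨆ n : ℕ, ENNReal.ofReal (schurNorm (Matrix.of fun i j : Fin n => A i j))

noncomputable def schurBound (P : Set (ℕ × ℕ)) : ℝ≥0∞ :=
  ⨆ S : {S : ℕ → ℕ → ℂ //
      (∀ i j, ‖S i j‖ ≤ 1) ∧ ∀ i j, (i, j) ∉ P → S i j = 0},
    schurNormENN S.1

noncomputable def matAbs {m : Type*} [Fintype m] [DecidableEq m] (T : Matrix m m ℂ) :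
    Matrix m m ℂ :=
  (Matrix.posSemidef_conjTranspose_mul_self T).isHermitian.eigenvectorUnitary.1 *
    Matrix.diagonal ((↑) ∘ (Real.sqrt ∘ (Matrix.posSemidef_conjTranspose_mul_self T).isHermitian.eigenvalues)) *
    (star (Matrix.posSemidef_conjTranspose_mul_self T).isHermitian.eigenvectorUnitary : Matrix m m ℂ)

noncomputable def vvec (v n i : ℕ) (C : {C : Finset (Fin v) // C.card = i}) :
    EuclideanSpace ℂ {A : Finset (Fin v) // A.card = n} :=
  WithLp.toLp 2 (fun A => if A.1 ∩ C.1 = ∅ then 1 else 0)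

/-! The vectors `v_C` are the rows of the disjointness matrix `D` of `i`-sets against `n`-sets.
Since `|C ∪ C'| = 2i - |C ∩ C'|`, Vandermonde's identity splits the Gram entry
`#{A | A ∩ (C ∪ C') = ∅} = C(v - 2i + |C ∩ C'|, n)` and gives
`D Dᴴ = ∑_{p + q = n} C(v - 2i, p) • Wqᴴ Wq`, where `Wq` is the inclusion matrix of `q`-sets in
`i`-sets. Every summand is positive semidefinite and the one with `q = i` is `C(v - 2i, n - i) • 1`,
which is positive definite as soon as `i + n ≤ v`; hence `D Dᴴ` is invertible and the rows of `D`
are independent. Counting the `(j+1)`-sets `C' ⊇ C` disjoint from `A` shows that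
`(v - n - j) • v_C` is the sum of the `v_{C'}` over the `(j+1)`-supersets `C'` of `C`, so the spans
increase with `i`, which gives the dimension count. -/

open Finset Matrix

section Counting

variable {α : Type*} [Fintype α] [DecidableEq α]

theorem card_finsetLen_subset (n : ℕ) (T : Finset α) :
    #{A : {A : Finset α // #A = n} | A.1 ⊆ T} = (#T).choose n := by
  rw [← card_powersetCard, ← card_map (Function.Embedding.subtype _)]
  congr 1
  ext A
  simp [mem_powersetCard, and_comm]

theorem card_finsetLen_disjoint (n : ℕ) (B : Finset α) :
    #{A : {A : Finset α // #A = n} | Disjoint B A.1} = (Fintype.card α - #B).choose n := by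
  simp_rw [← subset_compl_iff_disjoint_left, card_finsetLen_subset, card_compl]

theorem card_finsetLen_superset_disjoint {j : ℕ} {C A : Finset α} (hC : #C = j)
    (hCA : Disjoint C A) :
    #{C' : {C' : Finset α // #C' = j + 1} | Disjoint C'.1 A ∧ C ⊆ C'.1} = #(C ∪ A)ᶜ := by
  symm
  refine card_bij (fun x hx => ⟨insert x C, hC ▸ card_insert_of_notMem ?_⟩) ?_ ?_ ?_
  · simp_all
  · intro x hx
    simp only [mem_compl, mem_union, not_or] at hx
    simp [subset_insert, disjoint_insert_left, hx.2, hCA]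
  · intro x hx y hy hxy
    simp only [Subtype.mk.injEq] at hxy
    exact (insert_inj (by simp_all)).1 hxy
  · rintro ⟨C', hC'⟩ hmem
    simp only [mem_filter, mem_univ, true_and] at hmem
    obtain ⟨x, hxC, rfl⟩ := exists_eq_insert_iff.2 ⟨hmem.2, by omega⟩
    exact ⟨x, by simp_all, rfl⟩

end Counting

section Matrices

variable (R : Type*) (α : Type*) [DecidableEq α]

def inclusionMatrix [Zero R] [One R] (q i : ℕ) :
    Matrix {S : Finset α // #S = q} {C : Finset α // #C = i} R :=
  of fun S C => if S.1 ⊆ C.1 then 1 else 0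

def disjointnessMatrix [Zero R] [One R] (i n : ℕ) :
    Matrix {C : Finset α // #C = i} {A : Finset α // #A = n} R :=
  of fun C A => if Disjoint C.1 A.1 then 1 else 0

variable {R α}

theorem inclusionMatrix_self [Zero R] [One R] (i : ℕ) : inclusionMatrix R α i i = 1 := by
  ext S C
  simp only [inclusionMatrix, of_apply, one_apply, Subtype.ext_iff]
  exact if_congr ⟨fun h => eq_of_subset_of_card_le h (by rw [S.2, C.2]), fun h => h.le⟩ rfl rfl

theorem inclusionMatrix_mul_disjointnessMatrix [Fintype α] [Semiring R] (j n : ℕ) :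
    inclusionMatrix R α j (j + 1) * disjointnessMatrix R α (j + 1) n =
      ((Fintype.card α - (j + n) : ℕ) : R) • disjointnessMatrix R α j n := by
  ext C A
  simp only [mul_apply, Matrix.smul_apply, inclusionMatrix, disjointnessMatrix, of_apply,
    smul_eq_mul, mul_ite, mul_one, mul_zero]
  rw [sum_ite, sum_const_zero, add_zero, sum_boole, filter_filter]
  split_ifs with hCA
  · rw [card_finsetLen_superset_disjoint C.2 hCA, card_compl, card_union_of_disjoint hCA, C.2, A.2]
  · rw [filter_eq_empty_iff.2 fun C' _ h => hCA (h.1.mono_left h.2), card_empty, Nat.cast_zero]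

theorem span_range_disjointnessMatrix_le_succ {K : Type*} [Field K] [CharZero K] [Fintype α]
    {j n : ℕ} (h : j + n < Fintype.card α) :
    Submodule.span K (Set.range (disjointnessMatrix K α j n).row) ≤
      Submodule.span K (Set.range (disjointnessMatrix K α (j + 1) n).row) := by
  rw [Submodule.span_le]
  rintro _ ⟨C, rfl⟩
  have hc : ((Fintype.card α - (j + n) : ℕ) : K) ≠ 0 := Nat.cast_ne_zero.2 (by omega)
  have hrow : inclusionMatrix K α j (j + 1) C ᵥ* disjointnessMatrix K α (j + 1) n =
      ((Fintype.card α - (j + n) : ℕ) : K) • (disjointnessMatrix K α j n).row C := by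
    rw [← mul_apply_eq_vecMul, inclusionMatrix_mul_disjointnessMatrix]
    rfl
  rw [SetLike.mem_coe, ← (Submodule.smul_mem_iff _ hc), ← hrow, ← range_vecMulLinear]
  exact LinearMap.mem_range_self _ _

theorem disjointnessMatrix_mul_conjTranspose [Fintype α] [CommSemiring R] [StarRing R]
    {i : ℕ} (n : ℕ) (h : 2 * i ≤ Fintype.card α) :
    disjointnessMatrix R α i n * (disjointnessMatrix R α i n)ᴴ =
      ∑ p ∈ antidiagonal n, ((Fintype.card α - 2 * i).choose p.1 : R) •
        ((inclusionMatrix R α p.2 i)ᴴ * inclusionMatrix R α p.2 i) := by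
  ext C C'
  have hunion : Fintype.card α - #(C.1 ∪ C'.1) = (Fintype.card α - 2 * i) + #(C.1 ∩ C'.1) := by
    have := card_union_add_card_inter C.1 C'.1
    have := card_le_univ (C.1 ∪ C'.1)
    omega
  simp only [mul_apply, conjTranspose_apply, disjointnessMatrix, inclusionMatrix, of_apply,
    apply_ite star, star_one, star_zero, ite_mul, one_mul, zero_mul, Matrix.sum_apply,
    Matrix.smul_apply, smul_eq_mul]
  simp only [← ite_and, ← disjoint_union_left, ← subset_inter_iff, sum_boole,
    card_finsetLen_disjoint, card_finsetLen_subset, hunion, Nat.add_choose_eq, Nat.cast_sum,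
    Nat.cast_mul]

theorem posDef_disjointnessMatrix_mul_conjTranspose {𝕜 : Type*} [RCLike 𝕜] [Fintype α]
    {i n : ℕ} (hi : i ≤ n) (h : i + n ≤ Fintype.card α) :
    (disjointnessMatrix 𝕜 α i n * (disjointnessMatrix 𝕜 α i n)ᴴ).PosDef := by
  have hmem : (n - i, i) ∈ antidiagonal n := mem_antidiagonal.2 (by omega)
  rw [disjointnessMatrix_mul_conjTranspose n (by omega), ← add_sum_erase _ _ hmem]
  refine PosDef.add_posSemidef ?_ (posSemidef_sum _ fun p _ =>
    (posSemidef_conjTranspose_mul_self _).smul (Nat.cast_nonneg _))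
  rw [inclusionMatrix_self, conjTranspose_one, one_mul]
  exact PosDef.one.smul (Nat.cast_pos.2 (Nat.choose_pos (by omega)))

theorem linearIndependent_disjointnessMatrix_row {𝕜 : Type*} [RCLike 𝕜] [Fintype α]
    {i n : ℕ} (hi : i ≤ n) (h : i + n ≤ Fintype.card α) :
    LinearIndependent 𝕜 (disjointnessMatrix 𝕜 α i n).row := by
  rw [← vecMul_injective_iff]
  have hgram := vecMul_injective_of_isUnit
    (posDef_disjointnessMatrix_mul_conjTranspose (𝕜 := 𝕜) hi h).isUnit
  refine Function.Injective.of_comp (f := fun x => x ᵥ* (disjointnessMatrix 𝕜 α i n)ᴴ) ?_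
  simpa only [Function.comp_def, vecMul_vecMul] using hgram

end Matrices

theorem vvec_eq (v n i : ℕ) :
    vvec v n i = (WithLp.linearEquiv 2 ℂ _).symm ∘ (disjointnessMatrix ℂ (Fin v) i n).row := by
  funext C
  ext A
  simp [vvec, disjointnessMatrix, disjoint_iff_inter_eq_empty, inter_comm]

theorem linearIndependent_vvec {v n i : ℕ} (hi : i ≤ n) (h : i + n ≤ v) :
    LinearIndependent ℂ (vvec v n i) := by
  rw [vvec_eq]
  exact (linearIndependent_disjointnessMatrix_row (𝕜 := ℂ) hi (by simpa using h)).map' _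
    (LinearEquiv.ker _)

theorem span_range_vvec_le_succ {v n j : ℕ} (h : j + n < v) :
    Submodule.span ℂ (Set.range (vvec v n j)) ≤
      Submodule.span ℂ (Set.range (vvec v n (j + 1))) := by
  simp only [vvec_eq, Set.range_comp]
  rw [Submodule.span_image_linearEquiv, Submodule.span_image_linearEquiv]
  exact Submodule.map_mono (span_range_disjointnessMatrix_le_succ (by simpa using h))

theorem stmt_18 (v n i : ℕ) (hv : 2 * n ≤ v) (hi : i ≤ n) :
    LinearIndependent ℂ (vvec v n i) ∧
    Module.finrank ℂ
      ↥(Submodule.span ℂ (Set.range (vvec v n i)) ⊓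
        (Submodule.span ℂ (Set.range (vvec v n (i - 1))))ᗮ) =
      v.choose i - v.choose (i - 1) := by
  have hli : ∀ j ≤ n, LinearIndependent ℂ (vvec v n j) := fun j hj =>
    linearIndependent_vvec hj (by omega)
  have hle : Submodule.span ℂ (Set.range (vvec v n (i - 1))) ≤
      Submodule.span ℂ (Set.range (vvec v n i)) := by
    cases i with
    | zero => exact le_rfl
    | succ j => exact span_range_vvec_le_succ (by omega)
  have hdim := Submodule.finrank_add_inf_finrank_orthogonal hle
  rw [finrank_span_eq_card (hli i hi), finrank_span_eq_card (hli (i - 1) (by omega)),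
    Fintype.card_finset_len, Fintype.card_finset_len, Fintype.card_fin, inf_comm] at hdim
  exact ⟨hli i hi, by omega⟩
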